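/- arXiv:2207.04520 — 7 statements merged into one kernel-verified Lean document; each statement's English description precedes it below -/
import Mathlib

section
/- If a feasible CVRP solution exists, then there exists a feasible CVRP solution of minimum cost in which every customer appears exactly once across all routes; in particular, every route in that solution is elementary. -/
noncomputable section

/-- Sum of `c` over consecutive pairs of a list. -/
def pathCost {X : Type*} (c : X → X → ℝ) : List X → ℝ
  | [] => 0
  | [_] => 0
  | a :: b :: rest => c a b + pathCost c (b :: rest)

/-- Route cost: depot to first customer, consecutive legs, last customer back to depot. -/
def routeCost {X : Type*} [MetricSpace X] (o : X) (p : List X) : ℝ :=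
  pathCost dist (o :: (p ++ [o]))

/-- A route: a nonempty list of customers of `N` whose total demand is at most `d0`. -/
def IsRoute {X : Type*} (N : Finset X) (d : X → ℕ) (d0 : ℕ) (l : List X) : Prop :=
  l ≠ [] ∧ (∀ u ∈ l, u ∈ N) ∧ (l.map d).sum ≤ d0

/-- A feasible CVRP solution: at most `K` routes, covering every customer of `N`. -/
def IsFeasibleSol {X : Type*} (N : Finset X) (d : X → ℕ) (d0 K : ℕ)
    (L : List (List X)) : Prop :=
  (∀ l ∈ L, IsRoute N d d0 l) ∧ L.length ≤ K ∧ ∀ u ∈ N, ∃ l ∈ L, u ∈ l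

/-- Cost of a CVRP solution: the sum of the route costs. -/
def solCost {X : Type*} [MetricSpace X] (o : X) (L : List (List X)) : ℝ :=
  (L.map (routeCost o)).sum

/-!
Deleting a stop from a route never increases its cost (triangle inequality) nor its demand.
Keeping, in every route, only the customers not served by an earlier route, each once, and
dropping the routes that become empty, turns any feasible solution into one where every customer
is visited exactly once, at no greater cost. Such elementary solutions are finitely many (a route
visits at most `|N|` customers), so one of them has minimal cost, and it beats every feasible
solution because it beats that solution's elementary reduction.
-/

namespace List

variable {α β : Type*} {R : α → β → Prop} {l₁ : List α} {l₂ : List β}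

lemma SublistForall₂.exists_mem (h : SublistForall₂ R l₁ l₂) {a : α} (ha : a ∈ l₁) :
    ∃ b ∈ l₂, R a b := by
  induction h with
  | nil => simp at ha
  | @cons _ a₂ _ _ hr _ ih =>
    rcases mem_cons.1 ha with rfl | ha
    · exact ⟨a₂, mem_cons_self, hr⟩
    · obtain ⟨b, hb, hab⟩ := ih ha
      exact ⟨b, mem_cons_of_mem _ hb, hab⟩
  | cons_right _ ih =>
    obtain ⟨b, hb, hab⟩ := ih ha
    exact ⟨b, mem_cons_of_mem _ hb, hab⟩

lemma SublistForall₂.length_le (h : SublistForall₂ R l₁ l₂) :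
    l₁.length ≤ l₂.length := by
  obtain ⟨l, hl, hsub⟩ := sublistForall₂_iff.1 h
  exact hl.length_eq.trans_le hsub.length_le

end List

lemma Set.Finite.setOf_length_le_forall_mem {α : Type*} {s : Set α} (hs : s.Finite) (n : ℕ) :
    {l : List α | l.length ≤ n ∧ ∀ x ∈ l, x ∈ s}.Finite := by
  have := hs.to_subtype
  refine ((List.finite_length_le s n).image (List.map (↑))).subset ?_
  rintro l ⟨hlen, hmem⟩
  lift l to List s using hmem
  exact ⟨l, by simpa using hlen, rfl⟩

section Cost

variable {X : Type*}

lemma pathCost_nonneg [PseudoMetricSpace X] : ∀ l : List X, 0 ≤ pathCost dist l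
  | [] | [_] => le_rfl
  | _ :: b :: l => add_nonneg dist_nonneg (pathCost_nonneg (b :: l))

lemma pathCost_cons_le [PseudoMetricSpace X] (a x : X) :
    ∀ {l : List X}, l ≠ [] → pathCost dist (a :: l) ≤ dist a x + pathCost dist (x :: l)
  | b :: _, _ => by
    simp only [pathCost]
    linarith [dist_triangle a x b]

lemma pathCost_cons_append_le_of_sublist [PseudoMetricSpace X] (a b : X) {s t : List X}
    (h : s.Sublist t) : pathCost dist (a :: (s ++ [b])) ≤ pathCost dist (a :: (t ++ [b])) := by
  induction h generalizing a with
  | slnil => exact le_rfl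
  | cons x _ ih =>
    refine (ih a).trans ?_
    rw [List.cons_append]
    exact pathCost_cons_le a x (by simp)
  | cons_cons x _ ih =>
    simp only [List.cons_append, pathCost]
    linarith [ih x]

variable [MetricSpace X] (o : X)

lemma routeCost_nonneg (l : List X) : 0 ≤ routeCost o l :=
  pathCost_nonneg _

lemma routeCost_le_of_sublist {s t : List X} (h : s.Sublist t) : routeCost o s ≤ routeCost o t :=
  pathCost_cons_append_le_of_sublist o o h

lemma solCost_le_of_sublistForall₂ {L' L : List (List X)}
    (h : L'.SublistForall₂ List.Sublist L) : solCost o L' ≤ solCost o L := by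
  obtain ⟨M, hM, hML⟩ := List.sublistForall₂_iff.1 h
  calc solCost o L' ≤ solCost o M := by
        refine List.Forall₂.sum_le_sum ?_
        rw [List.forall₂_map_left_iff, List.forall₂_map_right_iff]
        exact hM.imp fun _ _ => routeCost_le_of_sublist o
    _ ≤ solCost o L := (hML.map _).sum_le_sum (by simp [routeCost_nonneg])

end Cost

section Feasibility

variable {X : Type*} {N : Finset X} {d : X → ℕ} {d0 K : ℕ}

lemma IsRoute.of_sublist {l l' : List X} (hl : IsRoute N d d0 l) (h : l'.Sublist l)
    (hne : l' ≠ []) : IsRoute N d d0 l' :=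
  ⟨hne, fun u hu => hl.2.1 u (h.subset hu), ((h.map d).sum_le_sum (by simp)).trans hl.2.2⟩

lemma IsFeasibleSol.of_sublistForall₂ {L L' : List (List X)} (hL : IsFeasibleSol N d d0 K L)
    (h : L'.SublistForall₂ List.Sublist L) (hne : ∀ l ∈ L', l ≠ [])
    (hcover : ∀ u ∈ N, ∃ l ∈ L', u ∈ l) : IsFeasibleSol N d d0 K L' := by
  refine ⟨fun l' hl' => ?_, h.length_le.trans hL.2.1, hcover⟩
  obtain ⟨l, hl, hsub⟩ := h.exists_mem hl'
  exact (hL.1 l hl).of_sublist hsub (hne l' hl')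

lemma finite_setOf_isFeasibleSol_nodup_flatten :
    {L : List (List X) | IsFeasibleSol N d d0 K L ∧ L.flatten.Nodup}.Finite := by
  refine ((N.finite_toSet.setOf_length_le_forall_mem N.card).setOf_length_le_forall_mem K).subset
    ?_
  rintro L ⟨⟨hroutes, hlen, -⟩, hnodup⟩
  refine ⟨hlen, fun l hl => ⟨?_, (hroutes l hl).2.1⟩⟩
  classical
  calc l.length = l.toFinset.card :=
        (List.toFinset_card_of_nodup ((List.nodup_flatten.1 hnodup).1 l hl)).symm
    _ ≤ N.card := Finset.card_le_card fun x hx => (hroutes l hl).2.1 x (List.mem_toFinset.1 hx)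

end Feasibility

section FirstVisits

variable {X : Type*} [DecidableEq X]

def firstVisits (s : Finset X) : List (List X) → List (List X)
  | [] => []
  | l :: L => l.dedup.filter (· ∉ s) :: firstVisits (s ∪ l.toFinset) L

lemma firstVisits_sublistForall₂ (s : Finset X) (L : List (List X)) :
    (firstVisits s L).SublistForall₂ List.Sublist L := by
  induction L generalizing s with
  | nil => exact .nil
  | cons l L ih => exact .cons (List.filter_sublist.trans l.dedup_sublist) (ih _)

lemma mem_flatten_firstVisits {s : Finset X} {L : List (List X)} {u : X} :
    u ∈ (firstVisits s L).flatten ↔ u ∉ s ∧ u ∈ L.flatten := by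
  induction L generalizing s with
  | nil => simp [firstVisits]
  | cons l L ih =>
    simp only [firstVisits, List.flatten_cons, List.mem_append, List.mem_filter, List.mem_dedup,
      ih, Finset.mem_union, List.mem_toFinset, decide_eq_true_eq]
    tauto

lemma nodup_flatten_firstVisits (s : Finset X) (L : List (List X)) :
    (firstVisits s L).flatten.Nodup := by
  induction L generalizing s with
  | nil => exact List.nodup_nil
  | cons l L ih =>
    refine List.nodup_append.2 ⟨l.nodup_dedup.filter _, ih _, ?_⟩
    rintro u hu _ hv rfl
    have hul : u ∈ l := List.mem_dedup.1 (List.mem_filter.1 hu).1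
    exact (mem_flatten_firstVisits.1 hv).1 (Finset.mem_union_right _ (List.mem_toFinset.2 hul))

end FirstVisits

lemma IsFeasibleSol.exists_nodup_flatten_solCost_le {X : Type*} [MetricSpace X] [DecidableEq X]
    (o : X) {N : Finset X} {d : X → ℕ} {d0 K : ℕ} {L : List (List X)}
    (hL : IsFeasibleSol N d d0 K L) :
    ∃ L', IsFeasibleSol N d d0 K L' ∧ L'.flatten.Nodup ∧ solCost o L' ≤ solCost o L := by
  set L' := (firstVisits ∅ L).filter (· ≠ [])
  have hsub : L'.Sublist (firstVisits ∅ L) := List.filter_sublist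
  have hrel : L'.SublistForall₂ List.Sublist L :=
    _root_.trans (@List.Sublist.sublistForall₂ _ _ _ _ hsub ⟨List.Sublist.refl⟩)
      (firstVisits_sublistForall₂ ∅ L)
  have hcover : ∀ u ∈ N, ∃ l ∈ L', u ∈ l := by
    intro u hu
    obtain ⟨l, hl, hul⟩ := List.mem_flatten.1 <|
      mem_flatten_firstVisits.2 ⟨Finset.notMem_empty u, List.mem_flatten.2 (hL.2.2 u hu)⟩
    exact ⟨l, List.mem_filter.2 ⟨hl, by simpa using List.ne_nil_of_mem hul⟩, hul⟩
  refine ⟨L', hL.of_sublistForall₂ hrel (fun l hl => by simpa using (List.mem_filter.1 hl).2)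
    hcover, (nodup_flatten_firstVisits ∅ L).sublist hsub.flatten,
    solCost_le_of_sublistForall₂ o hrel⟩

theorem exists_optimal_elementary_solution_general {X : Type*} [MetricSpace X] [DecidableEq X]
    (o : X) (N : Finset X) (d : X → ℕ) (d0 K : ℕ)
    (hfeas : ∃ L : List (List X), IsFeasibleSol N d d0 K L) :
    ∃ L : List (List X), IsFeasibleSol N d d0 K L ∧
      (∀ L' : List (List X), IsFeasibleSol N d d0 K L' → solCost o L ≤ solCost o L') ∧
      (∀ u ∈ N, L.flatten.count u = 1) ∧
      (∀ l ∈ L, l.Nodup) := by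
  obtain ⟨L₀, hL₀⟩ := hfeas
  obtain ⟨L₁, hL₁, hnodup₁, -⟩ := hL₀.exists_nodup_flatten_solCost_le o
  obtain ⟨L, ⟨hL, hnodup⟩, hmin⟩ := Set.exists_min_image _ (solCost o)
    finite_setOf_isFeasibleSol_nodup_flatten ⟨L₁, hL₁, hnodup₁⟩
  refine ⟨L, hL, fun L' hL' => ?_, fun u hu => List.count_eq_one_of_mem hnodup
    (List.mem_flatten.2 (hL.2.2 u hu)), (List.nodup_flatten.1 hnodup).1⟩
  obtain ⟨L'', hL'', hnodup'', hcost⟩ := hL'.exists_nodup_flatten_solCost_le o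
  exact (hmin L'' ⟨hL'', hnodup''⟩).trans hcost

/-- If a feasible CVRP solution exists, then there is a feasible solution of minimum cost in
which every customer appears exactly once across all routes; in particular, every route of
that solution is elementary. -/
theorem exists_optimal_elementary_solution {X : Type*} [MetricSpace X] [DecidableEq X]
    (o : X) (N : Finset X) (d : X → ℕ) (hd : ∀ u ∈ N, 1 ≤ d u) (d0 K : ℕ)
    (hfeas : ∃ L : List (List X), IsFeasibleSol N d d0 K L) :
    ∃ L : List (List X), IsFeasibleSol N d d0 K L ∧
      (∀ L' : List (List X), IsFeasibleSol N d d0 K L' → solCost o L ≤ solCost o L') ∧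
      (∀ u ∈ N, L.flatten.count u = 1) ∧
      (∀ l ∈ L, l.Nodup) :=
  exists_optimal_elementary_solution_general o N d d0 K hfeas
end
end

section
/- For every finite S ⊆ X with |S| ≥ 3 and all distinct v, w ∈ S: C(v, w, S) = min over y ∈ S \ {v, w} of (c(v, y) + C(y, w, S \ {v})). -/
/-!
A tour from `v` to `w` through `S` is `v` followed by a tour through `S \ {v}` that starts at
its second vertex `y`, and its cost is `c v y` plus the cost of that shorter tour. Since
`|S| ≥ 3`, the tour has a third vertex, so `y ≠ w`. Minimising over `y` and over the shorter
tour gives the recursion; all minima are attained because the tours form a finite nonempty set.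
-/

noncomputable section

/-- `tourCost c v w S`: the minimum, over all lists starting at `v`, ending at `w`, and
containing each element of `S` exactly once, of the sum of `c` over consecutive pairs
(as an infimum of the finite nonempty set of such costs). -/
def tourCost {X : Type*} (c : X → X → ℝ) (v w : X) (S : Finset X) : ℝ :=
  sInf (pathCost c '' {p : List X |
    p.head? = some v ∧ p.getLast? = some w ∧ p.Nodup ∧ ∀ x, x ∈ p ↔ x ∈ S})

namespace Tour

variable {X : Type*}

/-- `tourCost c a b A` is, by definition, `sInf (pathCost c '' tours a b A)`. -/
def tours (a b : X) (A : Finset X) : Set (List X) :=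
  {p : List X | p.head? = some a ∧ p.getLast? = some b ∧ p.Nodup ∧ ∀ x, x ∈ p ↔ x ∈ A}

lemma perm_toList_of_mem_tours {a b : X} {A : Finset X} {p : List X} (hp : p ∈ tours a b A) :
    p.Perm A.toList :=
  (List.perm_ext_iff_of_nodup hp.2.2.1 A.nodup_toList).2 fun x => by simpa using hp.2.2.2 x

lemma length_eq_card_of_mem_tours {a b : X} {A : Finset X} {p : List X}
    (hp : p ∈ tours a b A) : p.length = A.card := by
  rw [(perm_toList_of_mem_tours hp).length_eq, Finset.length_toList]

lemma tours_finite (a b : X) (A : Finset X) : (tours a b A).Finite :=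
  (List.finite_toSet A.toList.permutations).subset fun _ hp =>
    List.mem_permutations.2 (perm_toList_of_mem_tours hp)

lemma tours_nonempty [DecidableEq X] {a b : X} {A : Finset X} (ha : a ∈ A) (hb : b ∈ A)
    (hab : a ≠ b) : (tours a b A).Nonempty := by
  refine ⟨a :: ((A.erase a).erase b).toList ++ [b], rfl, List.getLast?_concat, ?_, ?_⟩
  · rw [List.nodup_append, List.nodup_cons]
    refine ⟨⟨by simp, Finset.nodup_toList _⟩, List.nodup_singleton b, ?_⟩
    simp only [List.mem_cons, Finset.mem_toList, Finset.mem_erase, List.not_mem_nil, or_false]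
    rintro x (rfl | ⟨hxb, -⟩) _ rfl <;> assumption
  · intro x
    simp only [List.mem_append, List.mem_cons, Finset.mem_toList, Finset.mem_erase,
      List.not_mem_nil, or_false]
    by_cases hxa : x = a
    · simp [hxa, ha]
    by_cases hxb : x = b
    · simp [hxb, hb]
    · simp [hxa, hxb]

lemma cons_cons_mem_tours_iff [DecidableEq X] {v y w : X} {S : Finset X} {r : List X} :
    v :: y :: r ∈ tours v w S ↔ v ∈ S ∧ y :: r ∈ tours y w (S.erase v) := by
  simp only [tours, Set.mem_ofPred_eq, List.head?_cons, List.getLast?_cons_cons,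
    List.nodup_cons (a := v), Finset.mem_erase, true_and]
  constructor
  · rintro ⟨hlast, ⟨hv, hnd⟩, hmem⟩
    refine ⟨(hmem v).1 List.mem_cons_self, hlast, hnd, fun x => ?_⟩
    rw [← hmem]
    exact ⟨fun hx => ⟨ne_of_mem_of_not_mem hx hv, List.mem_cons_of_mem _ hx⟩,
      fun ⟨hxv, hx⟩ => (List.mem_cons.1 hx).resolve_left hxv⟩
  · rintro ⟨hv, hlast, hnd, hmem⟩
    refine ⟨hlast, ⟨fun h => ((hmem v).1 h).1 rfl, hnd⟩, fun x => ?_⟩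
    rw [List.mem_cons, hmem]
    by_cases hxv : x = v <;> simp [hxv, hv]

lemma exists_eq_cons_cons_ne_of_mem_tours {a b : X} {A : Finset X} (hA : 3 ≤ A.card)
    {p : List X} (hp : p ∈ tours a b A) : ∃ y r, p = a :: y :: r ∧ y ≠ b := by
  obtain ⟨_ | ⟨y, _ | ⟨z, r⟩⟩, rfl⟩ := List.head?_eq_some_iff.1 hp.1
  case cons.cons =>
    refine ⟨y, z :: r, rfl, fun hyb => ?_⟩
    have hb : b ∈ z :: r := List.mem_of_getLast? (by simpa using hp.2.1)
    exact (List.nodup_cons.1 (List.nodup_cons.1 hp.2.2.1).2).1 (hyb ▸ hb)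
  all_goals
    have := length_eq_card_of_mem_tours hp
    simp only [List.length_cons, List.length_nil] at this
    omega

section Cost

variable (c : X → X → ℝ)

lemma tourCost_le_pathCost {a b : X} {A : Finset X} {p : List X} (hp : p ∈ tours a b A) :
    tourCost c a b A ≤ pathCost c p :=
  csInf_le ((tours_finite a b A).image _).bddBelow ⟨p, hp, rfl⟩

lemma le_tourCost [DecidableEq X] {a b : X} {A : Finset X} (ha : a ∈ A) (hb : b ∈ A)
    (hab : a ≠ b) {m : ℝ} (h : ∀ p ∈ tours a b A, m ≤ pathCost c p) :
    m ≤ tourCost c a b A :=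
  le_csInf ((tours_nonempty ha hb hab).image _) (Set.forall_mem_image.2 h)

lemma exists_pathCost_eq_tourCost [DecidableEq X] {a b : X} {A : Finset X} (ha : a ∈ A)
    (hb : b ∈ A) (hab : a ≠ b) : ∃ p ∈ tours a b A, pathCost c p = tourCost c a b A :=
  ((tours_nonempty ha hb hab).image _).csInf_mem ((tours_finite a b A).image _)

end Cost

end Tour

open Tour in
/-- Bellman recursion: for `|S| ≥ 3` and distinct `v, w ∈ S`,
`C(v,w,S) = min over y ∈ S \ {v,w} of (c(v,y) + C(y,w,S \ {v}))`. -/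
theorem tourCost_recursion {X : Type*} [DecidableEq X] (c : X → X → ℝ)
    (S : Finset X) (hS : 3 ≤ S.card) (v w : X) (hv : v ∈ S) (hw : w ∈ S) (hvw : v ≠ w) :
    tourCost c v w S =
      ((S.erase v).erase w).inf'
        (by
          have hwv : w ∈ S.erase v := Finset.mem_erase.mpr ⟨fun h => hvw h.symm, hw⟩
          rw [← Finset.card_pos, Finset.card_erase_of_mem hwv, Finset.card_erase_of_mem hv]
          omega)
        (fun y => c v y + tourCost c y w (S.erase v)) := by
  have hwS' : w ∈ S.erase v := Finset.mem_erase.2 ⟨hvw.symm, hw⟩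
  apply le_antisymm
  · obtain ⟨y, hy, hmin⟩ :=
      Finset.exists_mem_eq_inf' _ fun y => c v y + tourCost c y w (S.erase v)
    obtain ⟨hyw, hyS'⟩ := Finset.mem_erase.1 hy
    obtain ⟨q, hq, hqcost⟩ := exists_pathCost_eq_tourCost c hyS' hwS' hyw
    obtain ⟨r, rfl⟩ := List.head?_eq_some_iff.1 hq.1
    rw [hmin, ← hqcost]
    exact tourCost_le_pathCost c (cons_cons_mem_tours_iff.2 ⟨hv, hq⟩)
  · refine le_tourCost c hv hw hvw fun p hp => ?_
    obtain ⟨y, r, rfl, hyw⟩ := exists_eq_cons_cons_ne_of_mem_tours hS hp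
    obtain ⟨-, hq⟩ := cons_cons_mem_tours_iff.1 hp
    calc _ ≤ c v y + tourCost c y w (S.erase v) :=
          Finset.inf'_le _ (Finset.mem_erase.2 ⟨hyw, (hq.2.2.2 y).1 List.mem_cons_self⟩)
      _ ≤ c v y + pathCost c (y :: r) := by
          gcongr; exact tourCost_le_pathCost c hq
end
end

section
/- Let N̂ ⊆ X be finite with |N̂| ≥ 2, let u ∈ X \ N̂, and let w ∈ N̂. Then C(u, w, N̂ ∪ {u}) = min over v ∈ N̂ \ {w} of (c(u, v) + C(v, w, N̂)). -/
noncomputable section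

/-! A tour from `u` to `w` through `insert u N̂` is `u` followed by a tour through `N̂` from its
second vertex `v` to `w`, and conversely; when `|N̂| ≥ 2` that second vertex differs from `w`.
Hence both sides are the least cost over the same tours. -/

namespace TourCost

variable {X : Type*}

def tours (v w : X) (S : Finset X) : Set (List X) :=
  {p | p.head? = some v ∧ p.getLast? = some w ∧ p.Nodup ∧ ∀ x, x ∈ p ↔ x ∈ S}

theorem tours_finite (v w : X) (S : Finset X) : (tours v w S).Finite := by
  refine S.toList.permutations.finite_toSet.subset fun p ⟨_, _, hp, hmem⟩ => ?_
  rw [Set.mem_ofPred_eq, List.mem_permutations, List.perm_ext_iff_of_nodup hp S.nodup_toList]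
  simpa using hmem

theorem tours_nonempty [DecidableEq X] {v w : X} {S : Finset X} (hv : v ∈ S) (hw : w ∈ S)
    (hvw : v ≠ w) : (tours v w S).Nonempty := by
  have hl := ((S.erase v).erase w).nodup_toList
  refine ⟨v :: (((S.erase v).erase w).toList ++ [w]), rfl, ?_, ?_, fun x => ?_⟩
  · simp [List.getLast?_cons]
  · rw [List.nodup_cons, List.nodup_append]
    simp only [List.mem_append, Finset.mem_toList, Finset.mem_erase, List.mem_singleton]
    grind [List.nodup_singleton]
  · simp only [List.mem_cons, List.mem_append, Finset.mem_toList, Finset.mem_erase]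
    grind

theorem tourCost_le_pathCost (c : X → X → ℝ) {v w : X} {S : Finset X} {p : List X}
    (hp : p ∈ tours v w S) : tourCost c v w S ≤ pathCost c p :=
  csInf_le ((tours_finite v w S).image _).bddBelow ⟨p, hp, rfl⟩

theorem exists_pathCost_eq_tourCost (c : X → X → ℝ) {v w : X} {S : Finset X}
    (h : (tours v w S).Nonempty) : ∃ p ∈ tours v w S, pathCost c p = tourCost c v w S :=
  (h.image _).csInf_mem ((tours_finite v w S).image _)

theorem exists_eq_cons_of_mem_tours {v w : X} {S : Finset X} {p : List X}
    (hp : p ∈ tours v w S) : ∃ t, p = v :: t := by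
  obtain ⟨_ | ⟨a, t⟩, _⟩ := p <;> simp_all [tours]

theorem exists_eq_cons_cons_of_mem_tours {v w : X} {S : Finset X} {p : List X}
    (hp : p ∈ tours v w S) (hvw : v ≠ w) : ∃ a t, p = v :: a :: t := by
  obtain ⟨_ | ⟨a, t⟩, rfl⟩ := exists_eq_cons_of_mem_tours hp
  · exact absurd (by simpa [tours] using hp.2.1) hvw
  · exact ⟨a, t, rfl⟩

theorem ne_of_mem_tours {v w : X} {S : Finset X} {p : List X} (hS : 2 ≤ S.card)
    (hp : p ∈ tours v w S) : v ≠ w := by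
  obtain ⟨_ | ⟨a, t⟩, rfl⟩ := exists_eq_cons_of_mem_tours hp
  · have hmem : ∀ x, x = v ↔ x ∈ S := by simpa using hp.2.2.2
    have : S.card ≤ 1 := Finset.card_le_one.2 fun a ha b hb =>
      ((hmem a).2 ha).trans ((hmem b).2 hb).symm
    omega
  · obtain ⟨-, hw, hnd, -⟩ := hp
    rintro rfl
    exact (List.nodup_cons.1 hnd).1 (List.mem_of_getLast? hw)

theorem cons_cons_mem_tours_insert_iff [DecidableEq X] {u v w : X} {t : List X} {S : Finset X}
    (hu : u ∉ S) : u :: v :: t ∈ tours u w (insert u S) ↔ v :: t ∈ tours v w S := by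
  simp only [tours, Set.mem_ofPred_eq, List.head?_cons, List.getLast?_cons_cons, true_and,
    List.nodup_cons (a := u), Finset.mem_insert, List.mem_cons (a := u)]
  constructor
  · rintro ⟨hw, ⟨hut, hnd⟩, hmem⟩
    exact ⟨hw, hnd, fun x => by grind⟩
  · rintro ⟨hw, hnd, hmem⟩
    exact ⟨hw, ⟨fun h => hu ((hmem u).1 (List.mem_cons.2 h)), hnd⟩, fun x => by grind⟩

end TourCost

open TourCost Finset in
/-- For finite `N̂` with `|N̂| ≥ 2`, `u ∉ N̂` and `w ∈ N̂`:
`C(u, w, N̂ ∪ {u}) = min over v ∈ N̂ \ {w} of (c(u,v) + C(v,w,N̂))`. -/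
theorem tourCost_first_step {X : Type*} [DecidableEq X] (c : X → X → ℝ)
    (Nh : Finset X) (hN : 2 ≤ Nh.card) (u : X) (hu : u ∉ Nh) (w : X) (hw : w ∈ Nh) :
    tourCost c u w (insert u Nh) =
      (Nh.erase w).inf'
        (by rw [← Finset.card_pos, Finset.card_erase_of_mem hw]; omega)
        (fun v => c u v + tourCost c v w Nh) := by
  have huw : u ≠ w := by rintro rfl; exact hu hw
  apply le_antisymm
  · refine le_inf' _ _ fun v hv => ?_
    obtain ⟨hvw, hv⟩ := mem_erase.1 hv
    obtain ⟨p, hp, hcost⟩ := exists_pathCost_eq_tourCost c (tours_nonempty hv hw hvw)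
    obtain ⟨t, rfl⟩ := exists_eq_cons_of_mem_tours hp
    calc tourCost c u w (insert u Nh)
        ≤ pathCost c (u :: v :: t) :=
          tourCost_le_pathCost c ((cons_cons_mem_tours_insert_iff hu).2 hp)
      _ = c u v + tourCost c v w Nh := by rw [← hcost, pathCost]
  · obtain ⟨p, hp, hcost⟩ := exists_pathCost_eq_tourCost c
      (tours_nonempty (mem_insert_self u Nh) (mem_insert_of_mem hw) huw)
    obtain ⟨v, t, rfl⟩ := exists_eq_cons_cons_of_mem_tours hp huw
    have hvt := (cons_cons_mem_tours_insert_iff hu).1 hp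
    have hv : v ∈ Nh.erase w :=
      mem_erase.2 ⟨ne_of_mem_tours hN hvt, (hvt.2.2.2 v).1 List.mem_cons_self⟩
    calc _ ≤ c u v + tourCost c v w Nh := inf'_le _ hv
      _ ≤ c u v + pathCost c (v :: t) := by grw [tourCost_le_pathCost c hvt]
      _ = tourCost c u w (insert u Nh) := hcost
end
end

section
/- For u, v ∈ X and finite nonempty N̂ ⊆ X with u ∉ N̂ and v ∉ N̂ ∪ {u}: c_{u,v,N̂} = min over w ∈ N̂ of (C(u, w, N̂ ∪ {u}) + c(w, v)). -/
/-!
An admissible list for `c_{u,v,N̂}` is `u :: q ++ [v]` with `q` an enumeration of `N̂`; since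
`N̂` is nonempty, `q` has a last entry `w ∈ N̂`, and `u :: q` is then exactly a list counted by
`C(u, w, N̂ ∪ {u})` (here `u ∉ N̂` is what makes `u :: q` duplicate-free). Appending `v` adds
`c(w, v)` to the cost, so the two minima range over the same values.
-/

noncomputable section

/-- `interCost c u v N̂`: the minimum, over all lists starting at `u`, ending at `v`, whose
intermediate entries are exactly the elements of `N̂`, each occurring once, of the sum of `c`
over consecutive pairs. -/
def interCost {X : Type*} (c : X → X → ℝ) (u v : X) (Nh : Finset X) : ℝ :=
  sInf (pathCost c '' {p : List X |
    ∃ q : List X, p = u :: (q ++ [v]) ∧ q.Nodup ∧ ∀ x, x ∈ q ↔ x ∈ Nh})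

namespace TourCost

variable {X : Type*}

def tourLists (v w : X) (S : Finset X) : Set (List X) :=
  {p | p.head? = some v ∧ p.getLast? = some w ∧ p.Nodup ∧ ∀ x, x ∈ p ↔ x ∈ S}

def interLists (u v : X) (Nh : Finset X) : Set (List X) :=
  {p | ∃ q : List X, p = u :: (q ++ [v]) ∧ q.Nodup ∧ ∀ x, x ∈ q ↔ x ∈ Nh}

theorem tourCost_eq_sInf (c : X → X → ℝ) (v w : X) (S : Finset X) :
    tourCost c v w S = sInf (pathCost c '' tourLists v w S) := rfl

theorem interCost_eq_sInf (c : X → X → ℝ) (u v : X) (Nh : Finset X) :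
    interCost c u v Nh = sInf (pathCost c '' interLists u v Nh) := rfl

theorem pathCost_cons_append_singleton (c : X → X → ℝ) {q : List X} {w : X}
    (hw : q.getLast? = some w) (u v : X) :
    pathCost c (u :: (q ++ [v])) = pathCost c (u :: q) + c w v := by
  induction q generalizing u with
  | nil => simp at hw
  | cons a r ih =>
    cases r with
    | nil =>
      simp only [List.getLast?_singleton, Option.some.injEq] at hw
      simp [pathCost, hw]
    | cons b r =>
      have hw' : (b :: r).getLast? = some w := by simpa using hw
      simp only [List.cons_append, pathCost] at ih ⊢
      rw [ih hw' a]
      ring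

theorem finite_setOf_nodup_mem_iff (S : Finset X) :
    {q : List X | q.Nodup ∧ ∀ x, x ∈ q ↔ x ∈ S}.Finite := by
  apply S.toList.permutations.finite_toSet.subset
  rintro q ⟨hq, hqS⟩
  exact List.mem_permutations.mpr <|
    (List.perm_ext_iff_of_nodup hq S.nodup_toList).mpr fun x => by simp [hqS x]

theorem bddBelow_pathCost_tourLists (c : X → X → ℝ) (v w : X) (S : Finset X) :
    BddBelow (pathCost c '' tourLists v w S) :=
  ((finite_setOf_nodup_mem_iff S).subset fun _ hp => ⟨hp.2.2.1, hp.2.2.2⟩).image _ |>.bddBelow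

theorem bddBelow_pathCost_interLists (c : X → X → ℝ) (u v : X) (Nh : Finset X) :
    BddBelow (pathCost c '' interLists u v Nh) := by
  refine (((finite_setOf_nodup_mem_iff Nh).image fun q => u :: (q ++ [v])).subset ?_).image _
    |>.bddBelow
  rintro _ ⟨q, rfl, hq, hqN⟩
  exact ⟨q, ⟨hq, hqN⟩, rfl⟩

theorem interLists_nonempty (u v : X) (Nh : Finset X) : (interLists u v Nh).Nonempty :=
  ⟨_, Nh.toList, rfl, Nh.nodup_toList, fun x => by simp⟩

variable [DecidableEq X] {u w : X} {Nh : Finset X}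

theorem cons_mem_tourLists_insert_iff (hu : u ∉ Nh) (hw : w ∈ Nh) (q : List X) :
    u :: q ∈ tourLists u w (insert u Nh) ↔
      q.getLast? = some w ∧ q.Nodup ∧ ∀ x, x ∈ q ↔ x ∈ Nh := by
  have hlast : (u :: q).getLast? = some w ↔ q.getLast? = some w := by
    cases q with
    | nil => simpa using fun h : u = w => hu (h ▸ hw)
    | cons a r => rw [List.getLast?_cons_cons]
  simp only [tourLists, Set.mem_ofPred_eq, List.head?_cons, true_and, List.nodup_cons, hlast,
    List.mem_cons, Finset.mem_insert]
  constructor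
  · rintro ⟨hlast, ⟨huq, hq⟩, hqN⟩
    refine ⟨hlast, hq, fun x => ?_⟩
    by_cases hx : x = u
    · subst hx
      exact iff_of_false huq hu
    · simpa [hx] using hqN x
  · rintro ⟨hlast, hq, hqN⟩
    exact ⟨hlast, ⟨fun h => hu ((hqN u).mp h), hq⟩, fun x => or_congr_right (hqN x)⟩

theorem tourLists_insert_nonempty (hu : u ∉ Nh) (hw : w ∈ Nh) :
    (tourLists u w (insert u Nh)).Nonempty := by
  refine ⟨_, (cons_mem_tourLists_insert_iff hu hw ((Nh.erase w).toList ++ [w])).mpr ⟨?_, ?_, ?_⟩⟩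
  · exact List.getLast?_concat ..
  · exact List.nodup_append.mpr ⟨(Nh.erase w).nodup_toList, List.nodup_singleton w,
      fun x hx y hy => by simp_all⟩
  · intro x
    by_cases hx : x = w <;> simp [hx, hw]

theorem interCost_le_tourCost_add (c : X → X → ℝ) (v : X) (hu : u ∉ Nh) (hw : w ∈ Nh) :
    interCost c u v Nh ≤ tourCost c u w (insert u Nh) + c w v := by
  rw [interCost_eq_sInf, tourCost_eq_sInf, ← sub_le_iff_le_add]
  refine le_csInf ((tourLists_insert_nonempty hu hw).image _) ?_
  rintro _ ⟨p, hp, rfl⟩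
  obtain ⟨q, rfl⟩ := List.head?_eq_some_iff.mp hp.1
  obtain ⟨hlast, hq, hqN⟩ := (cons_mem_tourLists_insert_iff hu hw q).mp hp
  rw [sub_le_iff_le_add, ← pathCost_cons_append_singleton c hlast]
  exact csInf_le (bddBelow_pathCost_interLists c u v Nh) ⟨_, ⟨q, rfl, hq, hqN⟩, rfl⟩

theorem inf'_tourCost_add_le_interCost (c : X → X → ℝ) (v : X) (hne : Nh.Nonempty)
    (hu : u ∉ Nh) :
    Nh.inf' hne (fun w => tourCost c u w (insert u Nh) + c w v) ≤ interCost c u v Nh := by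
  rw [interCost_eq_sInf]
  refine le_csInf ((interLists_nonempty u v Nh).image _) ?_
  rintro _ ⟨_, ⟨q, rfl, hq, hqN⟩, rfl⟩
  have hq_ne : q ≠ [] := List.ne_nil_of_mem ((hqN _).mpr hne.choose_spec)
  obtain ⟨w, hlast⟩ := Option.isSome_iff_exists.mp (List.getLast?_isSome.mpr hq_ne)
  have hw : w ∈ Nh := (hqN w).mp (List.mem_of_getLast? hlast)
  calc Nh.inf' hne (fun w => tourCost c u w (insert u Nh) + c w v)
      ≤ tourCost c u w (insert u Nh) + c w v := Finset.inf'_le _ hw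
    _ ≤ pathCost c (u :: q) + c w v := by
      gcongr
      exact csInf_le (bddBelow_pathCost_tourLists c u w _) <|
        Set.mem_image_of_mem _ ((cons_mem_tourLists_insert_iff hu hw q).mpr ⟨hlast, hq, hqN⟩)
    _ = pathCost c (u :: (q ++ [v])) := (pathCost_cons_append_singleton c hlast u v).symm

end TourCost

open TourCost in
theorem interCost_last_step_general {X : Type*} [DecidableEq X] (c : X → X → ℝ)
    (u v : X) (Nh : Finset X) (hne : Nh.Nonempty) (hu : u ∉ Nh) :
    interCost c u v Nh =
      Nh.inf' hne (fun w => tourCost c u w (insert u Nh) + c w v) :=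
  le_antisymm (Finset.le_inf' hne _ fun _ hw => interCost_le_tourCost_add c v hu hw)
    (inf'_tourCost_add_le_interCost c v hne hu)

/-- For `u, v` and finite nonempty `N̂` with `u ∉ N̂` and `v ∉ N̂ ∪ {u}`:
`c_{u,v,N̂} = min over w ∈ N̂ of (C(u, w, N̂ ∪ {u}) + c(w, v))`. -/
theorem interCost_last_step {X : Type*} [DecidableEq X] (c : X → X → ℝ)
    (u v : X) (Nh : Finset X) (hne : Nh.Nonempty) (hu : u ∉ Nh) (hv : v ∉ Nh) (hvu : v ≠ u) :
    interCost c u v Nh =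
      Nh.inf' hne (fun w => tourCost c u w (insert u Nh) + c w v) :=
  interCost_last_step_general c u v Nh hne hu
end
end

section
/- Let P be a finite nonempty set of elementary paths, all with the same first entry and the same last entry. For a set N̂ write P(N̂) = {p ∈ P : the set of intermediate entries of p equals N̂}, and let Ω ⊆ P contain, for every N̂ with P(N̂) ≠ ∅, at least one path minimizing the cost c_p over P(N̂). Then for every choice of dual values π, π_0: min over p ∈ P of c̄_p = min over p ∈ Ω of c̄_p. -/
noncomputable section

/-- `N⁺ = N ∪ {−1, −2}`: `Sum.inl u` is customer `u`, `Sum.inr false` is the starting depot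
`−1`, and `Sum.inr true` is the ending depot `−2`. -/
abbrev NPlus (α : Type*) := α ⊕ Bool

/-- Dual values extended by `0` on the depots (this realizes intersecting with `N`). -/
def piExt {α : Type*} (π : α → ℝ) : NPlus α → ℝ := Sum.elim π fun _ => 0

/-- Reduced cost of a path `p`:
`c̄_p = c_p + π_0·[first entry = −1] − Σ_{w ∈ (N_p ∪ {first entry}) ∩ N} π_w`. -/
def redCost {α : Type*} [DecidableEq α] (c : NPlus α → NPlus α → ℝ)
    (π : α → ℝ) (π0 : ℝ) (p : List (NPlus α)) : ℝ :=
  pathCost c p + (if p.head? = some (Sum.inr false) then π0 else 0) -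
    ∑ w ∈ (p.tail.dropLast.toFinset ∪ (p.take 1).toFinset), piExt π w

/-- Let `P` be a finite nonempty set of elementary paths with common first entry `u` and
common last entry `v`, and let `Ω ⊆ P` contain, for each realized set `N̂` of intermediate
entries, some path of minimum cost among the paths of `P` with intermediate-entry set `N̂`.
Then for every choice of duals, the minimum reduced cost over `P` equals that over `Ω`. -/
theorem min_redCost_over_representatives {α : Type*} [DecidableEq α]
    (c : NPlus α → NPlus α → ℝ) (π : α → ℝ) (π0 : ℝ) (u v : NPlus α)
    (P : Finset (List (NPlus α))) (hPne : P.Nonempty)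
    (hP : ∀ p ∈ P, 2 ≤ p.length ∧ p.Nodup ∧ p.head? = some u ∧ p.getLast? = some v)
    (Ω : Finset (List (NPlus α))) (hΩP : Ω ⊆ P)
    (hΩ : ∀ Nh : Finset (NPlus α), (∃ p ∈ P, p.tail.dropLast.toFinset = Nh) →
      ∃ p ∈ Ω, p.tail.dropLast.toFinset = Nh ∧
        ∀ q ∈ P, q.tail.dropLast.toFinset = Nh → pathCost c p ≤ pathCost c q) :
    P.inf' hPne (redCost c π π0) =
      Ω.inf'
        (by
          obtain ⟨p, hp⟩ := hPne
          obtain ⟨q, hq, -, -⟩ := hΩ p.tail.dropLast.toFinset ⟨p, hp, rfl⟩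
          exact ⟨q, hq⟩)
        (redCost c π π0) := by
  have key : ∀ p ∈ P, ∀ q ∈ P, p.tail.dropLast.toFinset = q.tail.dropLast.toFinset →
      pathCost c p ≤ pathCost c q → redCost c π π0 p ≤ redCost c π π0 q := by
    intro p hp q hq hset hcost
    obtain ⟨-, -, hpu, -⟩ := hP p hp
    obtain ⟨-, -, hqu, -⟩ := hP q hq
    have hph : p.head? = q.head? := hpu.trans hqu.symm
    have hpt : p.take 1 = q.take 1 := by
      cases p with
      | nil => simp at hpu
      | cons a l =>
        cases q with
        | nil => simp at hqu
        | cons b m =>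
          simp only [List.head?, Option.some.injEq] at hpu hqu
          simp [hpu, hqu]
    unfold redCost
    rw [hset, hph, hpt]
    linarith
  apply le_antisymm
  · rw [Finset.le_inf'_iff]
    intro p hp
    exact Finset.inf'_le _ (hΩP hp)
  · rw [Finset.le_inf'_iff]
    intro p hp
    obtain ⟨q, hq, hset, hmin⟩ := hΩ p.tail.dropLast.toFinset ⟨p, hp, rfl⟩
    exact le_trans (Finset.inf'_le _ hq) (key q (hΩP hq) p hp hset (hmin p hp rfl))
end
end

section
/- Let Ω be nonempty, let π : N → ℝ with π_u ≥ 0 for all u and let π_0 ≥ 0. Then every θ : Ω → ℝ with θ ≥ 0 satisfying Σ_{l∈Ω} a_{ul} θ_l ≥ 1 for all u ∈ N and Σ_{l∈Ω} θ_l ≤ K satisfies Σ_{l∈Ω} c_l θ_l ≥ Σ_{u∈N} π_u − K·π_0 + K·min(0, min_{l∈Ω} c̄_l). In particular Ψ(Ω) is bounded below by this Lagrangian bound. -/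
noncomputable section

/-- The Lagrangian bound: any feasible solution of the set-cover LP has objective at least
`Σ_u π_u − K·π_0 + K·min(0, min_{l∈Ω} c̄_l)` whenever `π ≥ 0` and `π_0 ≥ 0`, where
`c̄_l = c_l + π_0 − Σ_u a_{ul} π_u`. -/
theorem lagrangian_bound {α ι : Type*} [Fintype α]
    (Ω : Finset ι) (hΩ : Ω.Nonempty) (c : ι → ℝ) (a : α → ι → ℕ) (K : ℕ)
    (π : α → ℝ) (π0 : ℝ) (hπ : ∀ u : α, 0 ≤ π u) (hπ0 : 0 ≤ π0)
    (θ : ι → ℝ) (hθ0 : ∀ l ∈ Ω, 0 ≤ θ l)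
    (hcov : ∀ u : α, 1 ≤ ∑ l ∈ Ω, (a u l : ℝ) * θ l)
    (hK : ∑ l ∈ Ω, θ l ≤ (K : ℝ)) :
    (∑ u : α, π u) - (K : ℝ) * π0 +
        (K : ℝ) * min 0 (Ω.inf' hΩ fun l => c l + π0 - ∑ u : α, (a u l : ℝ) * π u) ≤
      ∑ l ∈ Ω, c l * θ l := by
  set m : ℝ := min 0 (Ω.inf' hΩ fun l => c l + π0 - ∑ u : α, (a u l : ℝ) * π u) with hm
  have hm0 : m ≤ 0 := min_le_left _ _
  have hcl : ∀ l ∈ Ω, m - π0 + ∑ u : α, (a u l : ℝ) * π u ≤ c l := by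
    intro l hl
    have h1 : m ≤ c l + π0 - ∑ u : α, (a u l : ℝ) * π u :=
      le_trans (min_le_right _ _) (Finset.inf'_le _ hl)
    linarith
  have key : ∑ l ∈ Ω, (m - π0 + ∑ u : α, (a u l : ℝ) * π u) * θ l ≤ ∑ l ∈ Ω, c l * θ l :=
    Finset.sum_le_sum fun l hl => mul_le_mul_of_nonneg_right (hcl l hl) (hθ0 l hl)
  have expand : ∑ l ∈ Ω, (m - π0 + ∑ u : α, (a u l : ℝ) * π u) * θ l
      = (m - π0) * ∑ l ∈ Ω, θ l + ∑ u : α, π u * ∑ l ∈ Ω, (a u l : ℝ) * θ l := by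
    simp only [add_mul, Finset.sum_add_distrib, Finset.sum_mul, Finset.mul_sum]
    rw [Finset.sum_comm]
    congr 1
    · exact Finset.sum_congr rfl fun x _ => Finset.sum_congr rfl fun y _ => by ring
  rw [expand] at key
  have h1 : (m - π0) * (K : ℝ) ≤ (m - π0) * ∑ l ∈ Ω, θ l := by
    rcases le_total (m - π0) 0 with h | h
    · exact mul_le_mul_of_nonpos_left hK h
    · have : π0 ≤ m := by linarith
      have : m = π0 := le_antisymm (by linarith) this
      nlinarith [hK]
  have h2 : ∑ u : α, π u ≤ ∑ u : α, π u * ∑ l ∈ Ω, (a u l : ℝ) * θ l := by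
    calc ∑ u : α, π u = ∑ u : α, π u * 1 := by simp
    _ ≤ _ := Finset.sum_le_sum fun u _ => mul_le_mul_of_nonneg_left (hcov u) (hπ u)
  nlinarith [h1, h2, key]
end
end

section
/- Suppose Ω is closed under single-customer removal: for every l ∈ Ω and every u ∈ N with a_{ul} ≥ 1, there exists l′ ∈ Ω with a_{ul′} = a_{ul} − 1, a_{wl′} = a_{wl} for all w ∈ N \ {u}, and c_{l′} ≤ c_l. If the equality-constrained LP Ψ_=(Ω) is feasible, then Ψ(Ω) = Ψ_=(Ω); that is, replacing the covering equalities by covering inequalities does not loosen the LP relaxation. -/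
noncomputable section

/-- Feasibility for the set-cover LP over the route set `Ω` (covering inequalities). -/
def FeasibleOn {α ι : Type*} [Fintype α] (Ω : Finset ι) (a : α → ι → ℕ) (K : ℕ)
    (θ : ι → ℝ) : Prop :=
  (∀ l ∈ Ω, 0 ≤ θ l) ∧ (∀ u : α, 1 ≤ ∑ l ∈ Ω, (a u l : ℝ) * θ l) ∧
    (∑ l ∈ Ω, θ l ≤ (K : ℝ))

/-- Feasibility for the set-partition LP over `Ω` (covering equalities). -/
def EqFeasibleOn {α ι : Type*} [Fintype α] (Ω : Finset ι) (a : α → ι → ℕ) (K : ℕ)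
    (θ : ι → ℝ) : Prop :=
  (∀ l ∈ Ω, 0 ≤ θ l) ∧ (∀ u : α, (∑ l ∈ Ω, (a u l : ℝ) * θ l) = 1) ∧
    (∑ l ∈ Ω, θ l ≤ (K : ℝ))

/-- The set-cover LP value `Ψ(Ω)`. -/
def Psi {α ι : Type*} [Fintype α] (Ω : Finset ι) (c : ι → ℝ) (a : α → ι → ℕ) (K : ℕ) : ℝ :=
  sInf {r : ℝ | ∃ θ : ι → ℝ, FeasibleOn Ω a K θ ∧ r = ∑ l ∈ Ω, c l * θ l}

/-- The set-partition (equality-constrained) LP value `Ψ₌(Ω)`. -/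
def PsiEq {α ι : Type*} [Fintype α] (Ω : Finset ι) (c : ι → ℝ) (a : α → ι → ℕ) (K : ℕ) : ℝ :=
  sInf {r : ℝ | ∃ θ : ι → ℝ, EqFeasibleOn Ω a K θ ∧ r = ∑ l ∈ Ω, c l * θ l}


/-!
Fix a feasible cover `θ` and a customer `u`, covered `t ≥ 1` times. Iterating single-customer
removal strips `u` from every route; pushing `θ` forward along this stripping map gives a
solution that covers `u` zero times, every other customer exactly as before, uses the same fleet
and costs no more. Mixing `θ` and the stripped solution with weights `1/t` and `1 - 1/t` then
covers `u` exactly once. Repeating this for every customer turns any cover solution into a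
partition solution of no larger cost, so both LPs have the same set of lower bounds on their
values (whether or not these are empty or unbounded), hence the same infimum.
-/

section RouteLP

variable {α ι : Type*}

def ClosedUnderRemoval (Ω : Finset ι) (c : ι → ℝ) (a : α → ι → ℕ) : Prop :=
  ∀ l ∈ Ω, ∀ u : α, 1 ≤ a u l →
    ∃ l' ∈ Ω, a u l' = a u l - 1 ∧ (∀ w : α, w ≠ u → a w l' = a w l) ∧ c l' ≤ c l

theorem ClosedUnderRemoval.exists_strip {Ω : Finset ι} {c : ι → ℝ} {a : α → ι → ℕ}
    (hΩ : ClosedUnderRemoval Ω c a) (u : α) :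
    ∃ g : ι → ι, ∀ l ∈ Ω,
      g l ∈ Ω ∧ a u (g l) = 0 ∧ (∀ w : α, w ≠ u → a w (g l) = a w l) ∧ c (g l) ≤ c l := by
  have strip : ∀ n, ∀ l ∈ Ω, a u l = n →
      ∃ l' ∈ Ω, a u l' = 0 ∧ (∀ w : α, w ≠ u → a w l' = a w l) ∧ c l' ≤ c l := by
    intro n
    induction n with
    | zero => exact fun l hl hu => ⟨l, hl, hu, fun _ _ => rfl, le_rfl⟩
    | succ n ih =>
      intro l hl hu
      obtain ⟨l₁, hl₁, hu₁, hw₁, hc₁⟩ := hΩ l hl u (by omega)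
      obtain ⟨l₀, hl₀, hu₀, hw₀, hc₀⟩ := ih l₁ hl₁ (by omega)
      exact ⟨l₀, hl₀, hu₀, fun w hw => (hw₀ w hw).trans (hw₁ w hw), hc₀.trans hc₁⟩
  choose! g hg using fun l hl => strip (a u l) l hl rfl
  exact ⟨g, hg⟩

section Pushforward

variable [DecidableEq ι]

def pushforward (Ω : Finset ι) (g : ι → ι) (θ : ι → ℝ) (l' : ι) : ℝ :=
  ∑ l ∈ Ω with g l = l', θ l

theorem sum_mul_pushforward {Ω : Finset ι} {g : ι → ι} (hg : ∀ l ∈ Ω, g l ∈ Ω)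
    (f θ : ι → ℝ) :
    ∑ l' ∈ Ω, f l' * pushforward Ω g θ l' = ∑ l ∈ Ω, f (g l) * θ l := by
  refine Eq.trans ?_ (Finset.sum_fiberwise_of_maps_to hg _)
  refine Finset.sum_congr rfl fun l' _ => ?_
  rw [pushforward, Finset.mul_sum]
  refine Finset.sum_congr rfl fun l hl => ?_
  rw [(Finset.mem_filter.mp hl).2]

theorem pushforward_nonneg {Ω : Finset ι} {θ : ι → ℝ} (hθ : ∀ l ∈ Ω, 0 ≤ θ l)
    (g : ι → ι) (l' : ι) : 0 ≤ pushforward Ω g θ l' :=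
  Finset.sum_nonneg fun l hl => hθ l (Finset.mem_filter.mp hl).1

end Pushforward

variable [Fintype α] {Ω : Finset ι} {c : ι → ℝ} {a : α → ι → ℕ} {K : ℕ} {θ : ι → ℝ}

theorem EqFeasibleOn.feasibleOn (hθ : EqFeasibleOn Ω a K θ) : FeasibleOn Ω a K θ :=
  ⟨hθ.1, fun u => (hθ.2.1 u).ge, hθ.2.2⟩

theorem FeasibleOn.exists_cover_eq_one (hΩ : ClosedUnderRemoval Ω c a)
    (hθ : FeasibleOn Ω a K θ) (u : α) :
    ∃ θ', FeasibleOn Ω a K θ' ∧ ∑ l ∈ Ω, (a u l : ℝ) * θ' l = 1 ∧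
      (∀ w : α, w ≠ u → ∑ l ∈ Ω, (a w l : ℝ) * θ' l = ∑ l ∈ Ω, (a w l : ℝ) * θ l) ∧
      ∑ l ∈ Ω, c l * θ' l ≤ ∑ l ∈ Ω, c l * θ l := by
  classical
  obtain ⟨hpos, hcov, hK⟩ := hθ
  obtain ⟨g, hg⟩ := hΩ.exists_strip u
  set t := ∑ l ∈ Ω, (a u l : ℝ) * θ l
  have ht : 1 ≤ t := hcov u
  have hs : 0 ≤ 1 - t⁻¹ := sub_nonneg.mpr (inv_le_one_of_one_le₀ ht)
  set θ' := fun l => t⁻¹ * θ l + (1 - t⁻¹) * pushforward Ω g θ l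
  have mix : ∀ f : ι → ℝ, ∑ l ∈ Ω, f l * θ' l =
      t⁻¹ * ∑ l ∈ Ω, f l * θ l + (1 - t⁻¹) * ∑ l ∈ Ω, f (g l) * θ l := by
    intro f
    simp only [θ', mul_add, Finset.sum_add_distrib, mul_left_comm (f _), ← Finset.mul_sum,
      sum_mul_pushforward fun l hl => (hg l hl).1]
  have cov_u : ∑ l ∈ Ω, (a u l : ℝ) * θ' l = 1 := by
    have stripped : ∑ l ∈ Ω, (a u (g l) : ℝ) * θ l = 0 :=
      Finset.sum_eq_zero fun l hl => by simp [(hg l hl).2.1]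
    rw [mix, stripped, mul_zero, add_zero]
    exact inv_mul_cancel₀ (by positivity)
  have cov_w : ∀ w : α, w ≠ u →
      ∑ l ∈ Ω, (a w l : ℝ) * θ' l = ∑ l ∈ Ω, (a w l : ℝ) * θ l := by
    intro w hw
    have unchanged : ∑ l ∈ Ω, (a w (g l) : ℝ) * θ l = ∑ l ∈ Ω, (a w l : ℝ) * θ l :=
      Finset.sum_congr rfl fun l hl => by rw [(hg l hl).2.2.1 w hw]
    rw [mix, unchanged]
    ring
  have mass : ∑ l ∈ Ω, θ' l = ∑ l ∈ Ω, θ l := by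
    have := mix fun _ => 1
    simp only [one_mul] at this
    rw [this]
    ring
  have cost : ∑ l ∈ Ω, c (g l) * θ l ≤ ∑ l ∈ Ω, c l * θ l :=
    Finset.sum_le_sum fun l hl => mul_le_mul_of_nonneg_right (hg l hl).2.2.2 (hpos l hl)
  refine ⟨θ', ⟨fun l hl => ?_, fun w => ?_, mass ▸ hK⟩, cov_u, cov_w, ?_⟩
  · exact add_nonneg (mul_nonneg (by positivity) (hpos l hl))
      (mul_nonneg hs (pushforward_nonneg hpos g l))
  · obtain rfl | hw := eq_or_ne w u
    · exact cov_u.ge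
    · exact (cov_w w hw).ge.trans' (hcov w)
  · rw [mix]
    linarith [mul_le_mul_of_nonneg_left cost hs]

theorem FeasibleOn.exists_eqFeasibleOn (hΩ : ClosedUnderRemoval Ω c a)
    (hθ : FeasibleOn Ω a K θ) :
    ∃ θ', EqFeasibleOn Ω a K θ' ∧ ∑ l ∈ Ω, c l * θ' l ≤ ∑ l ∈ Ω, c l * θ l := by
  classical
  suffices ∀ S : Finset α, ∃ θ', FeasibleOn Ω a K θ' ∧
      (∀ u ∈ S, ∑ l ∈ Ω, (a u l : ℝ) * θ' l = 1) ∧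
      ∑ l ∈ Ω, c l * θ' l ≤ ∑ l ∈ Ω, c l * θ l by
    obtain ⟨θ', hθ', hcov, hcost⟩ := this Finset.univ
    exact ⟨θ', ⟨hθ'.1, fun u => hcov u (Finset.mem_univ u), hθ'.2.2⟩, hcost⟩
  intro S
  induction S using Finset.induction_on with
  | empty => exact ⟨θ, hθ, by simp, le_rfl⟩
  | insert u S hu ih =>
    obtain ⟨θ₁, hθ₁, hS₁, hc₁⟩ := ih
    obtain ⟨θ₂, hθ₂, hu₂, hw₂, hc₂⟩ := hθ₁.exists_cover_eq_one hΩ u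
    refine ⟨θ₂, hθ₂, fun w hw => ?_, hc₂.trans hc₁⟩
    obtain rfl | hwS := Finset.mem_insert.mp hw
    · exact hu₂
    · rw [hw₂ w (ne_of_mem_of_not_mem hwS hu), hS₁ w hwS]

end RouteLP

theorem cover_eq_partition_under_removal_general {α ι : Type*} [Fintype α]
    (Ω : Finset ι) (c : ι → ℝ) (a : α → ι → ℕ) (K : ℕ)
    (hclose : ∀ l ∈ Ω, ∀ u : α, 1 ≤ a u l →
      ∃ l' ∈ Ω, a u l' = a u l - 1 ∧ (∀ w : α, w ≠ u → a w l' = a w l) ∧ c l' ≤ c l) :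
    Psi Ω c a K = PsiEq Ω c a K := by
  refine csInf_eq_csInf_of_forall_exists_le ?_ ?_
  · rintro _ ⟨θ, hθ, rfl⟩
    obtain ⟨θ', hθ', hcost⟩ := hθ.exists_eqFeasibleOn hclose
    exact ⟨_, ⟨θ', hθ', rfl⟩, hcost⟩
  · rintro _ ⟨θ, hθ, rfl⟩
    exact ⟨_, ⟨θ, hθ.feasibleOn, rfl⟩, le_rfl⟩

/-- If `Ω` is closed under removing a single customer visit without increasing cost, and the
equality-constrained LP is feasible, then replacing covering equalities by inequalities does
not change the LP value: `Ψ(Ω) = Ψ₌(Ω)`. -/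
theorem cover_eq_partition_under_removal {α ι : Type*} [Fintype α]
    (Ω : Finset ι) (c : ι → ℝ) (a : α → ι → ℕ) (K : ℕ)
    (hclose : ∀ l ∈ Ω, ∀ u : α, 1 ≤ a u l →
      ∃ l' ∈ Ω, a u l' = a u l - 1 ∧ (∀ w : α, w ≠ u → a w l' = a w l) ∧ c l' ≤ c l)
    (hfeas : ∃ θ : ι → ℝ, EqFeasibleOn Ω a K θ) :
    Psi Ω c a K = PsiEq Ω c a K :=
  cover_eq_partition_under_removal_general Ω c a K hclose
end
end
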